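/- For random variables X, Y, Z and any Z-measurable probability measure Q on the space of X, the disintegrated mutual information satisfies I^Z(X;Y) ≤ E_{Y|Z}[KL(P_{X|Y,Z} || Q)], with equality when Q = P_{X|Z}. -/

import Mathlib

open MeasureTheory ProbabilityTheory Real
open scoped ENNReal

open Classical in
/-- Kullback–Leibler divergence, `+∞` unless `P ≪ Q` and the log-likelihood ratio
is `P`-integrable. -/
noncomputable def klDiv {𝒳 : Type*} [MeasurableSpace 𝒳] (P Q : Measure 𝒳) : ℝ≥0∞ :=
  if P ≪ Q ∧ Integrable (llr P Q) P then ENNReal.ofReal (∫ x, llr P Q x ∂P) else ⊤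

/-- Mutual information `I(X;Y) = KL(P_{X,Y} ‖ P_X ⊗ P_Y)`. -/
noncomputable def mutualInfo {Ω 𝒳 𝒴 : Type*} [MeasurableSpace Ω] [MeasurableSpace 𝒳]
    [MeasurableSpace 𝒴] (μ : Measure Ω) (X : Ω → 𝒳) (Y : Ω → 𝒴) : ℝ≥0∞ :=
  klDiv (μ.map fun ω => (X ω, Y ω)) ((μ.map X).prod (μ.map Y))

/-- Disintegrated mutual information `I^z(X;Y) = KL(P_{X,Y|Z=z} ‖ P_{X|Z=z} ⊗ P_{Y|Z=z})`. -/
noncomputable def disMI {Ω 𝒳 𝒴 𝒵 : Type*} [MeasurableSpace Ω]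
    [MeasurableSpace 𝒳] [StandardBorelSpace 𝒳] [Nonempty 𝒳]
    [MeasurableSpace 𝒴] [StandardBorelSpace 𝒴] [Nonempty 𝒴]
    [MeasurableSpace 𝒵] (μ : Measure Ω) [IsFiniteMeasure μ]
    (X : Ω → 𝒳) (Y : Ω → 𝒴) (Z : Ω → 𝒵) (z : 𝒵) : ℝ≥0∞ :=
  klDiv (condDistrib (fun ω => (X ω, Y ω)) Z μ z)
    ((condDistrib X Z μ z).prod (condDistrib Y Z μ z))

/-- Conditional mutual information `I(X;Y|Z) = E_Z[I^Z(X;Y)]`. -/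
noncomputable def condMI {Ω 𝒳 𝒴 𝒵 : Type*} [MeasurableSpace Ω]
    [MeasurableSpace 𝒳] [StandardBorelSpace 𝒳] [Nonempty 𝒳]
    [MeasurableSpace 𝒴] [StandardBorelSpace 𝒴] [Nonempty 𝒴]
    [MeasurableSpace 𝒵] (μ : Measure Ω) [IsFiniteMeasure μ]
    (X : Ω → 𝒳) (Y : Ω → 𝒴) (Z : Ω → 𝒵) : ℝ≥0∞ :=
  ∫⁻ z, disMI μ X Y Z z ∂(μ.map Z)

/-- `X` is `σ`-subgaussian under `μ`: the cumulant generating function of the centered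
variable is bounded by `λ²σ²/2`. -/
noncomputable def Subgaussian {Ω : Type*} [MeasurableSpace Ω] (μ : Measure Ω)
    (X : Ω → ℝ) (σ : ℝ) : Prop :=
  ∀ l : ℝ, Real.log (∫ ω, Real.exp (l * (X ω - ∫ ω', X ω' ∂μ)) ∂μ) ≤ l ^ 2 * σ ^ 2 / 2

namespace KLAux

variable {α : Type*} {mα : MeasurableSpace α} {P Q : Measure α}

lemma klDiv_of_ac_int (h : P ≪ Q) (hi : Integrable (llr P Q) P) :
    klDiv P Q = ENNReal.ofReal (∫ x, llr P Q x ∂P) := by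
  rw [klDiv, if_pos ⟨h, hi⟩]

lemma klDiv_of_not (h : ¬ (P ≪ Q ∧ Integrable (llr P Q) P)) : klDiv P Q = ⊤ := by
  rw [klDiv, if_neg h]

lemma integrable_exp_neg_llr [IsProbabilityMeasure P] [IsProbabilityMeasure Q] (h : P ≪ Q) :
    Integrable (fun x => Real.exp (-(llr P Q x))) P :=
  (Measure.integrable_toReal_rnDeriv (μ := Q) (ν := P)).congr (exp_neg_llr h).symm

lemma integral_exp_neg_llr_le [IsProbabilityMeasure P] [IsProbabilityMeasure Q] (h : P ≪ Q) :
    ∫ x, Real.exp (-(llr P Q x)) ∂P ≤ 1 := by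
  rw [integral_congr_ae (exp_neg_llr h)]
  calc ∫ x, (Q.rnDeriv P x).toReal ∂P
      ≤ (Q Set.univ).toReal := by
        rw [← setIntegral_univ]
        exact Measure.setIntegral_toReal_rnDeriv_le (by simp)
    _ = 1 := by simp

lemma negPart_llr_le (x : α) : max (-(llr P Q x)) 0 ≤ Real.exp (-(llr P Q x)) :=
  max_le (by linarith [Real.add_one_le_exp (-(llr P Q x))]) (Real.exp_pos _).le

lemma integrable_negPart_llr [IsProbabilityMeasure P] [IsProbabilityMeasure Q] (h : P ≪ Q) :
    Integrable (fun x => max (-(llr P Q x)) 0) P := by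
  refine (integrable_exp_neg_llr h).mono'
    (((measurable_llr P Q).neg.max measurable_const).aestronglyMeasurable) ?_
  refine Filter.Eventually.of_forall fun x => ?_
  rw [Real.norm_of_nonneg (le_max_right _ _)]
  exact negPart_llr_le x

lemma integral_negPart_llr_le [IsProbabilityMeasure P] [IsProbabilityMeasure Q] (h : P ≪ Q) :
    ∫ x, max (-(llr P Q x)) 0 ∂P ≤ 1 :=
  le_trans (integral_mono (integrable_negPart_llr h) (integrable_exp_neg_llr h)
    fun x => negPart_llr_le x) (integral_exp_neg_llr_le h)

lemma integral_llr_nonneg [IsProbabilityMeasure P] [IsProbabilityMeasure Q] (h : P ≪ Q)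
    (hi : Integrable (llr P Q) P) : 0 ≤ ∫ x, llr P Q x ∂P := by
  have h1 : ∫ x, -(llr P Q x) ∂P ≤ ∫ x, (Real.exp (-(llr P Q x)) - 1) ∂P :=
    integral_mono hi.neg ((integrable_exp_neg_llr h).sub (integrable_const 1))
      (fun x => by linarith [Real.add_one_le_exp (-(llr P Q x))])
  rw [integral_sub (integrable_exp_neg_llr h) (integrable_const 1), integral_neg] at h1
  have h2 := integral_exp_neg_llr_le h
  simp only [integral_const, probReal_univ, smul_eq_mul, one_mul] at h1
  linarith

lemma posPart_sub_negPart (a : ℝ) : max a 0 - max (-a) 0 = a := by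
  rcases le_total a 0 with h | h
  · rw [max_eq_right h, max_eq_left (by linarith)]; ring
  · rw [max_eq_left h, max_eq_right (by linarith)]; ring

lemma ofReal_eq_ofReal_posPart (a : ℝ) : ENNReal.ofReal a = ENNReal.ofReal (max a 0) := by
  rcases le_total a 0 with h | h
  · rw [ENNReal.ofReal_of_nonpos h, max_eq_right h, ENNReal.ofReal_zero]
  · rw [max_eq_left h]

lemma lintegral_ofReal_eq_posPart (f : α → ℝ) :
    ∫⁻ x, ENNReal.ofReal (f x) ∂P = ∫⁻ x, ENNReal.ofReal (max (f x) 0) ∂P :=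
  lintegral_congr fun x => ofReal_eq_ofReal_posPart _

lemma lintegral_ofReal_llr_eq_top [IsProbabilityMeasure P] [IsProbabilityMeasure Q]
    (h : P ≪ Q) (hi : ¬ Integrable (llr P Q) P) :
    ∫⁻ x, ENNReal.ofReal (llr P Q x) ∂P = ⊤ := by
  by_contra hne
  have hpos : Integrable (fun x => max (llr P Q x) 0) P := by
    refine ⟨((measurable_llr P Q).max measurable_const).aestronglyMeasurable, ?_⟩
    rw [hasFiniteIntegral_iff_ofReal (f := fun x => max (llr P Q x) 0)
      (Filter.Eventually.of_forall fun x => le_max_right _ _)]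
    rw [← lintegral_ofReal_eq_posPart]
    exact lt_top_iff_ne_top.mpr hne
  exact hi (((hpos.sub (integrable_negPart_llr h)).congr
    (Filter.Eventually.of_forall fun x => posPart_sub_negPart _)))

lemma klDiv_le_lintegral_ofReal_llr [IsProbabilityMeasure P] [IsProbabilityMeasure Q]
    (h : P ≪ Q) :
    klDiv P Q ≤ ∫⁻ x, ENNReal.ofReal (llr P Q x) ∂P := by
  by_cases hi : Integrable (llr P Q) P
  · rw [klDiv_of_ac_int h hi, lintegral_ofReal_eq_posPart,
      ← ofReal_integral_eq_lintegral_ofReal hi.pos_part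
        (Filter.Eventually.of_forall fun x => le_max_right _ _)]
    exact ENNReal.ofReal_le_ofReal (integral_mono hi hi.pos_part fun x => le_max_left _ _)
  · rw [lintegral_ofReal_llr_eq_top h hi]
    exact le_top

lemma lintegral_ofReal_llr_le [IsProbabilityMeasure P] [IsProbabilityMeasure Q]
    (h : P ≪ Q) :
    ∫⁻ x, ENNReal.ofReal (llr P Q x) ∂P ≤ klDiv P Q + 1 := by
  by_cases hi : Integrable (llr P Q) P
  · rw [klDiv_of_ac_int h hi, lintegral_ofReal_eq_posPart,
      ← ofReal_integral_eq_lintegral_ofReal hi.pos_part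
        (Filter.Eventually.of_forall fun x => le_max_right _ _)]
    have hsplit : ∫ x, max (llr P Q x) 0 ∂P
        = ∫ x, llr P Q x ∂P + ∫ x, max (-(llr P Q x)) 0 ∂P := by
      rw [← integral_add hi (integrable_negPart_llr h)]
      refine integral_congr_ae (Filter.Eventually.of_forall fun x => ?_)
      show max (llr P Q x) 0 = llr P Q x + max (-(llr P Q x)) 0
      have := posPart_sub_negPart (llr P Q x); linarith
    rw [hsplit]
    calc ENNReal.ofReal (∫ x, llr P Q x ∂P + ∫ x, max (-(llr P Q x)) 0 ∂P)
        ≤ ENNReal.ofReal (∫ x, llr P Q x ∂P + 1) :=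
          ENNReal.ofReal_le_ofReal (by linarith [integral_negPart_llr_le h])
      _ ≤ ENNReal.ofReal (∫ x, llr P Q x ∂P) + ENNReal.ofReal 1 := ENNReal.ofReal_add_le
      _ = ENNReal.ofReal (∫ x, llr P Q x ∂P) + 1 := by rw [ENNReal.ofReal_one]
  · rw [klDiv_of_not fun hc => hi hc.2]
    simp

lemma klDiv_self (P : Measure α) [IsProbabilityMeasure P] : klDiv P P = 0 := by
  have hllr : llr P P =ᵐ[P] 0 := by
    filter_upwards [Measure.rnDeriv_self P] with x hx
    simp [llr, hx]
  have hi : Integrable (llr P P) P := (integrable_const (0 : ℝ)).congr hllr.symm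
  rw [klDiv_of_ac_int Measure.AbsolutelyContinuous.rfl hi, integral_congr_ae hllr]
  simp


variable {β' : Type*} {mβ' : MeasurableSpace β'}
variable {β : Type*} {mβ : MeasurableSpace β}

lemma map_equiv_map_symm (e : α ≃ᵐ β) (P : Measure α) : (P.map e).map e.symm = P := by
  rw [Measure.map_map e.symm.measurable e.measurable]
  simp

lemma map_equiv_absolutelyContinuous_iff (e : α ≃ᵐ β) :
    P.map e ≪ Q.map e ↔ P ≪ Q := by
  constructor
  · intro h
    have h2 := h.map e.symm.measurable
    rwa [map_equiv_map_symm, map_equiv_map_symm] at h2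
  · intro h
    exact h.map e.measurable

lemma rnDeriv_map_equiv (e : α ≃ᵐ β) [IsProbabilityMeasure P] [IsProbabilityMeasure Q]
    (h : P ≪ Q) :
    (fun x => (P.map e).rnDeriv (Q.map e) (e x)) =ᵐ[Q] P.rnDeriv Q := by
  haveI : IsProbabilityMeasure (P.map e) := Measure.isProbabilityMeasure_map e.measurable.aemeasurable
  haveI : IsProbabilityMeasure (Q.map e) := Measure.isProbabilityMeasure_map e.measurable.aemeasurable
  have hme := Measure.measurable_rnDeriv (P.map e) (Q.map e)
  have hQd : Q.withDensity (fun x => (P.map e).rnDeriv (Q.map e) (e x)) = P := by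
    have h1 : (Q.map e).withDensity ((P.map e).rnDeriv (Q.map e)) = P.map e :=
      Measure.withDensity_rnDeriv_eq _ _ (h.map e.measurable)
    have h2 : (Q.map e).withDensity ((P.map e).rnDeriv (Q.map e))
        = (Q.withDensity (fun x => (P.map e).rnDeriv (Q.map e) (e x))).map e := by
      ext s hs
      rw [withDensity_apply _ hs, Measure.map_apply e.measurable hs,
        withDensity_apply _ (e.measurable hs), setLIntegral_map hs hme e.measurable]
    have h3 := h2.symm.trans h1
    calc Q.withDensity (fun x => (P.map e).rnDeriv (Q.map e) (e x))
        = ((Q.withDensity (fun x => (P.map e).rnDeriv (Q.map e) (e x))).map e).map e.symm := by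
          rw [map_equiv_map_symm]
      _ = (P.map e).map e.symm := by rw [h3]
      _ = P := map_equiv_map_symm e P
  have h4 := Measure.rnDeriv_withDensity (f := fun x => (P.map e).rnDeriv (Q.map e) (e x)) Q (hme.comp e.measurable)
  rw [hQd] at h4
  exact h4.symm

lemma klDiv_map_equiv (e : α ≃ᵐ β) (P Q : Measure α) [IsProbabilityMeasure P]
    [IsProbabilityMeasure Q] :
    klDiv (P.map e) (Q.map e) = klDiv P Q := by
  by_cases h : P ≪ Q
  · have hac : P.map e ≪ Q.map e := h.map e.measurable
    have hllr : (fun x => llr (P.map e) (Q.map e) (e x)) =ᵐ[P] llr P Q := by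
      filter_upwards [h.ae_le (rnDeriv_map_equiv e h)] with x hx
      simp only [llr]
      rw [hx]
    have hint : Integrable (llr (P.map e) (Q.map e)) (P.map e) ↔ Integrable (llr P Q) P := by
      rw [integrable_map_equiv e]
      exact integrable_congr hllr
    by_cases hi : Integrable (llr P Q) P
    · rw [klDiv_of_ac_int hac (hint.mpr hi), klDiv_of_ac_int h hi]
      congr 1
      rw [integral_map_equiv e]
      exact integral_congr_ae hllr
    · rw [klDiv_of_not (fun hc => hi (hint.mp hc.2)), klDiv_of_not (fun hc => hi hc.2)]
  · rw [klDiv_of_not (fun hc => h ((map_equiv_absolutelyContinuous_iff e).mp hc.1)),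
      klDiv_of_not (fun hc => h hc.1)]


end KLAux
namespace KLAux
variable {β γ : Type*} {mβ : MeasurableSpace β} {mγ : MeasurableSpace γ}
  [MeasurableSpace.CountablyGenerated γ]

noncomputable def density2 (κ : Kernel β γ) (R : Measure γ) : β × γ → ℝ≥0∞ :=
  fun p => Kernel.rnDeriv κ (Kernel.const β R) p.1 p.2

lemma measurable_density2 (κ : Kernel β γ) (R : Measure γ) : Measurable (density2 κ R) :=
  Kernel.measurable_rnDeriv _ _

lemma density2_ae_eq (κ : Kernel β γ) [IsFiniteKernel κ] (R : Measure γ) [IsFiniteMeasure R]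
    (y : β) :
    (fun x => density2 κ R (y, x)) =ᵐ[R] (κ y).rnDeriv R := by
  have h := Kernel.rnDeriv_eq_rnDeriv_measure (κ := κ) (η := Kernel.const β R) (a := y)
  simpa [density2, Kernel.const_apply] using h

lemma measurableSet_acSet (κ : Kernel β γ) [IsFiniteKernel κ] (R : Measure γ)
    [IsFiniteMeasure R] : MeasurableSet {y | κ y ≪ R} := by
  have h := Kernel.measurableSet_absolutelyContinuous κ (Kernel.const β R)
  simpa [Kernel.const_apply] using h

lemma compProd_eq_withDensity (P Q : Measure β) [IsFiniteMeasure P] [IsFiniteMeasure Q]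
    (κ : Kernel β γ) [IsFiniteKernel κ] (R : Measure γ) [IsFiniteMeasure R]
    (hPQ : P ≪ Q) (hκR : ∀ᵐ y ∂P, κ y ≪ R) :
    P ⊗ₘ κ = (Q.prod R).withDensity (fun p => P.rnDeriv Q p.1 * density2 κ R p) := by
  have hfP : Measurable (P.rnDeriv Q) := Measure.measurable_rnDeriv _ _
  have hg : Measurable (density2 κ R) := measurable_density2 κ R
  have hmul : Measurable fun p : β × γ => P.rnDeriv Q p.1 * density2 κ R p :=
    (hfP.comp measurable_fst).mul hg
  have hae : ∀ᵐ y ∂Q, P.rnDeriv Q y ≠ 0 → κ y ≪ R := by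
    have h0 : P {y | κ y ≪ R}ᶜ = 0 := by
      rw [ae_iff] at hκR; simpa [Set.compl_setOf] using hκR
    rw [← Measure.withDensity_rnDeriv_eq P Q hPQ,
      withDensity_apply _ (measurableSet_acSet κ R).compl] at h0
    have h1 := (setLIntegral_eq_zero_iff (measurableSet_acSet κ R).compl hfP).mp h0
    filter_upwards [h1] with y hy hne
    by_contra hy2
    exact hne (hy hy2)
  ext s hs
  rw [withDensity_apply _ hs, Measure.compProd_apply hs, ← lintegral_indicator hs,
    lintegral_prod _ (hmul.indicator hs).aemeasurable]
  conv_lhs => rw [← Measure.withDensity_rnDeriv_eq P Q hPQ]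
  rw [lintegral_withDensity_eq_lintegral_mul Q hfP (Kernel.measurable_kernel_prodMk_left hs)]
  refine lintegral_congr_ae ?_
  filter_upwards [hae] with y hy
  simp only [Pi.mul_apply]
  have hind : ∀ x : γ, s.indicator (fun p => P.rnDeriv Q p.1 * density2 κ R p) (y, x)
      = P.rnDeriv Q y * (Prod.mk y ⁻¹' s).indicator (fun x => density2 κ R (y, x)) x := by
    intro x
    by_cases hxs : (y, x) ∈ s <;> simp [Set.indicator, hxs]
  simp_rw [hind]
  have hmy : Measurable (fun x : γ => density2 κ R (y, x)) := hg.comp measurable_prodMk_left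
  rw [lintegral_const_mul _ (hmy.indicator (measurable_prodMk_left hs))]
  by_cases h0 : P.rnDeriv Q y = 0
  · simp [h0]
  · congr 1
    rw [lintegral_indicator (measurable_prodMk_left hs)]
    calc κ y (Prod.mk y ⁻¹' s)
        = (R.withDensity ((κ y).rnDeriv R)) (Prod.mk y ⁻¹' s) := by
          rw [Measure.withDensity_rnDeriv_eq _ _ (hy h0)]
      _ = (R.withDensity (fun x => density2 κ R (y, x))) (Prod.mk y ⁻¹' s) := by
          rw [withDensity_congr_ae (density2_ae_eq κ R y)]
      _ = ∫⁻ x, density2 κ R (y, x) ∂(R.restrict (Prod.mk y ⁻¹' s)) :=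
          withDensity_apply _ (measurable_prodMk_left hs)

lemma compProd_ac_prod (P Q : Measure β) [IsFiniteMeasure P] [IsFiniteMeasure Q]
    (κ : Kernel β γ) [IsFiniteKernel κ] (R : Measure γ) [IsFiniteMeasure R]
    (hPQ : P ≪ Q) (hκR : ∀ᵐ y ∂P, κ y ≪ R) :
    P ⊗ₘ κ ≪ Q.prod R := by
  rw [compProd_eq_withDensity P Q κ R hPQ hκR]
  exact withDensity_absolutelyContinuous _ _

lemma rnDeriv_compProd_prod (P Q : Measure β) [IsFiniteMeasure P] [IsFiniteMeasure Q]
    (κ : Kernel β γ) [IsFiniteKernel κ] (R : Measure γ) [IsFiniteMeasure R]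
    (hPQ : P ≪ Q) (hκR : ∀ᵐ y ∂P, κ y ≪ R) :
    (P ⊗ₘ κ).rnDeriv (Q.prod R)
      =ᵐ[Q.prod R] (fun p => P.rnDeriv Q p.1 * density2 κ R p) := by
  have hmul : Measurable fun p : β × γ => P.rnDeriv Q p.1 * density2 κ R p :=
    ((Measure.measurable_rnDeriv _ _).comp measurable_fst).mul (measurable_density2 κ R)
  rw [compProd_eq_withDensity P Q κ R hPQ hκR]
  exact Measure.rnDeriv_withDensity _ hmul

lemma ae_absolutelyContinuous_of_compProd_ac (P : Measure β) [IsFiniteMeasure P]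
    (κ : Kernel β γ) [IsFiniteKernel κ] (Q : Measure β) [SFinite Q] (R : Measure γ)
    [IsFiniteMeasure R] (hac : P ⊗ₘ κ ≪ Q.prod R) : ∀ᵐ y ∂P, κ y ≪ R := by
  set η := Kernel.const β R with hη
  have hSm : MeasurableSet (Kernel.mutuallySingularSet κ η) :=
    Kernel.measurableSet_mutuallySingularSet κ η
  have hQR : (Q.prod R) (Kernel.mutuallySingularSet κ η) = 0 := by
    rw [Measure.prod_apply hSm]
    have hzero : ∀ y : β, R (Prod.mk y ⁻¹' Kernel.mutuallySingularSet κ η) = 0 := by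
      intro y
      have h := Kernel.measure_mutuallySingularSetSlice κ η y
      exact h
    simp [hzero]
  have hP : (P ⊗ₘ κ) (Kernel.mutuallySingularSet κ η) = 0 := hac hQR
  rw [Measure.compProd_apply hSm,
    lintegral_eq_zero_iff (Kernel.measurable_kernel_prodMk_left hSm)] at hP
  filter_upwards [hP] with y hy
  have hy' : κ y (Prod.mk y ⁻¹' Kernel.mutuallySingularSet κ η) = 0 := hy
  set t : Set γ := Prod.mk y ⁻¹' Kernel.mutuallySingularSet κ η with ht
  have h1 : Kernel.singularPart κ η y t = 0 := by
    refine le_antisymm ?_ zero_le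
    calc Kernel.singularPart κ η y t
        ≤ κ y t := by
          conv_rhs => rw [← Kernel.rnDeriv_add_singularPart κ η]
          simp [Kernel.coe_add]
      _ = 0 := hy'
  have h2 : Kernel.singularPart κ η y tᶜ = 0 := by
    have h := Kernel.singularPart_compl_mutuallySingularSetSlice κ η y
    exact h
  have huniv : Kernel.singularPart κ η y Set.univ = 0 := by
    rw [← Set.union_compl_self t]
    exact le_antisymm ((measure_union_le _ _).trans (by rw [h1, h2]; simp)) zero_le
  have h3 := (Kernel.singularPart_eq_zero_iff_absolutelyContinuous κ η y).mp
    (Measure.measure_univ_eq_zero.mp huniv)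
  simpa [hη, Kernel.const_apply] using h3


end KLAux
namespace KLAux

variable {β γ : Type*} {mβ : MeasurableSpace β} {mγ : MeasurableSpace γ}
  [MeasurableSpace.CountablyGenerated γ]

lemma klDiv_compProd_prod (P Q : Measure β) [IsProbabilityMeasure P] [IsProbabilityMeasure Q]
    (κ : Kernel β γ) [IsMarkovKernel κ] (R : Measure γ) [IsProbabilityMeasure R] :
    klDiv (P ⊗ₘ κ) (Q.prod R) = klDiv P Q + ∫⁻ y, klDiv (κ y) R ∂P := by
  haveI : IsProbabilityMeasure (P ⊗ₘ κ) :=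
    ⟨by rw [Measure.compProd_apply_univ]; exact measure_univ⟩
  by_cases hPQ : P ≪ Q
  swap
  · have hnac : ¬ (P ⊗ₘ κ ≪ Q.prod R) := by
      intro hac
      refine hPQ fun s hQs => ?_
      obtain ⟨t, hst, htm, hQt⟩ := exists_measurable_superset_of_null hQs
      have h1 : (Q.prod R) (t ×ˢ Set.univ) = 0 := by rw [Measure.prod_prod, hQt, zero_mul]
      have h2 := hac h1
      rw [Measure.compProd_apply_prod htm MeasurableSet.univ] at h2
      simp only [measure_univ] at h2
      rw [setLIntegral_one] at h2
      exact measure_mono_null hst h2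
    rw [klDiv_of_not (fun hc => hnac hc.1), klDiv_of_not (fun hc => hPQ hc.1)]
    simp
  by_cases hκR : ∀ᵐ y ∂P, κ y ≪ R
  swap
  · have hnac : ¬ (P ⊗ₘ κ ≪ Q.prod R) := fun hac =>
      hκR (ae_absolutelyContinuous_of_compProd_ac P κ Q R hac)
    rw [klDiv_of_not (fun hc => hnac hc.1)]
    have hBm : MeasurableSet {y | κ y ≪ R} := measurableSet_acSet κ R
    have hpos : P {y | κ y ≪ R}ᶜ ≠ 0 := by
      rw [Set.compl_setOf]
      intro h0
      exact hκR (ae_iff.mpr h0)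
    have htop : ∫⁻ y, klDiv (κ y) R ∂P = ⊤ := by
      refine top_le_iff.mp ?_
      calc (⊤ : ℝ≥0∞) = ⊤ * P {y | κ y ≪ R}ᶜ := by rw [ENNReal.top_mul hpos]
        _ = ∫⁻ y, ({y | κ y ≪ R}ᶜ).indicator (fun _ => ⊤) y ∂P := by
            rw [lintegral_indicator_const hBm.compl]
        _ ≤ ∫⁻ y, klDiv (κ y) R ∂P := by
            refine lintegral_mono fun y => ?_
            by_cases hyB : κ y ≪ R
            · simp [Set.indicator, hyB]
            · simp [Set.indicator, hyB, klDiv_of_not (fun hc => hyB hc.1)]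
    rw [htop]
    simp
  -- main case
  have hAC : P ⊗ₘ κ ≪ Q.prod R := compProd_ac_prod P Q κ R hPQ hκR
  have hfPm : Measurable (P.rnDeriv Q) := Measure.measurable_rnDeriv _ _
  have hgm : Measurable (density2 κ R) := measurable_density2 κ R
  have hrn := rnDeriv_compProd_prod P Q κ R hPQ hκR
  set F : β × γ → ℝ := fun p => llr P Q p.1 with hFdef
  set G : β × γ → ℝ := fun p => Real.log (density2 κ R p).toReal with hGdef
  have hFm : Measurable F := (measurable_llr _ _).comp measurable_fst
  have hGm : Measurable G := Real.measurable_log.comp hgm.ennreal_toReal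
  have hfst : (P ⊗ₘ κ).map Prod.fst = P := Measure.fst_compProd P κ
  have h_ae_fst : ∀ {p : β → Prop}, MeasurableSet {y | p y} → (∀ᵐ y ∂P, p y) →
      (∀ᵐ q ∂(P ⊗ₘ κ), p q.1) := by
    intro p hpm hp
    refine (Measure.ae_compProd_iff (p := fun q : β × γ => p q.1)
      (measurable_fst hpm)).mpr ?_
    filter_upwards [hp] with y hy
    exact Filter.Eventually.of_forall fun _ => hy
  have h_int_fst : ∀ (u : β → ℝ), Measurable u →
      (Integrable (fun q : β × γ => u q.1) (P ⊗ₘ κ) ↔ Integrable u P) := by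
    intro u hu
    have h := integrable_map_measure (f := Prod.fst) (μ := P ⊗ₘ κ) (g := u)
      hu.aestronglyMeasurable measurable_fst.aemeasurable
    rw [hfst] at h
    exact h.symm
  have h_integral_fst : ∀ (u : β → ℝ), Measurable u →
      ∫ q, u q.1 ∂(P ⊗ₘ κ) = ∫ y, u y ∂P := by
    intro u hu
    conv_rhs => rw [← hfst]
    exact (integral_map measurable_fst.aemeasurable hu.aestronglyMeasurable).symm
  have hfP_pos : ∀ᵐ q ∂(P ⊗ₘ κ), 0 < P.rnDeriv Q q.1 ∧ P.rnDeriv Q q.1 ≠ ⊤ := by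
    refine h_ae_fst (p := fun y => 0 < P.rnDeriv Q y ∧ P.rnDeriv Q y ≠ ⊤) ?_ ?_
    · rw [Set.setOf_and]
      exact (measurableSet_lt measurable_const hfPm).inter
        ((hfPm (measurableSet_singleton ⊤)).compl)
    · filter_upwards [Measure.rnDeriv_pos hPQ, hPQ.ae_le (Measure.rnDeriv_lt_top P Q)]
        with y h1 h2
      exact ⟨h1, h2.ne⟩
  have hg_pos : ∀ᵐ q ∂(P ⊗ₘ κ), 0 < density2 κ R q ∧ density2 κ R q ≠ ⊤ := by
    refine (Measure.ae_compProd_iff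
      (p := fun q : β × γ => 0 < density2 κ R q ∧ density2 κ R q ≠ ⊤) ?_).mpr ?_
    · rw [Set.setOf_and]
      exact (measurableSet_lt measurable_const hgm).inter
        ((hgm (measurableSet_singleton ⊤)).compl)
    filter_upwards [hκR] with y hy
    have h2 : ∀ᵐ x ∂(κ y), (κ y).rnDeriv R x < ⊤ := hy.ae_le (Measure.rnDeriv_lt_top _ _)
    have h3 : (fun x => density2 κ R (y, x)) =ᵐ[κ y] (κ y).rnDeriv R :=
      hy.ae_le (density2_ae_eq κ R y)
    filter_upwards [Measure.rnDeriv_pos hy, h2, h3] with x hx1 hx2 hx3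
    have hx3' : density2 κ R (y, x) = (κ y).rnDeriv R x := hx3
    rw [hx3']
    exact ⟨hx1, hx2.ne⟩
  have hllr_joint : llr (P ⊗ₘ κ) (Q.prod R) =ᵐ[P ⊗ₘ κ] fun p => F p + G p := by
    filter_upwards [hAC.ae_le hrn, hfP_pos, hg_pos] with p hp hp1 hp2
    rw [llr_def]
    simp only
    rw [hp, ENNReal.toReal_mul, Real.log_mul
      (ENNReal.toReal_ne_zero.mpr ⟨hp1.1.ne', hp1.2⟩)
      (ENNReal.toReal_ne_zero.mpr ⟨hp2.1.ne', hp2.2⟩)]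
    rfl
  have hGslice : ∀ᵐ y ∂P, (fun x => G (y, x)) =ᵐ[κ y] llr (κ y) R := by
    filter_upwards [hκR] with y hy
    filter_upwards [hy.ae_le (density2_ae_eq κ R y)] with x hx
    have hx' : density2 κ R (y, x) = (κ y).rnDeriv R x := hx
    rw [llr_def]
    simp only [hGdef]
    rw [hx']
  have hGneg_int : Integrable (fun p => max (-(G p)) 0) (P ⊗ₘ κ) := by
    refine ⟨(hGm.neg.max measurable_const).aestronglyMeasurable, ?_⟩
    rw [hasFiniteIntegral_iff_ofReal (f := fun p => max (-(G p)) 0)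
      (Filter.Eventually.of_forall fun p => le_max_right _ _)]
    rw [Measure.lintegral_compProd (f := fun p => ENNReal.ofReal (max (-(G p)) 0)) (hGm.neg.max measurable_const).ennreal_ofReal]
    have hb : ∀ᵐ y ∂P, ∫⁻ x, ENNReal.ofReal (max (-(G (y, x))) 0) ∂(κ y) ≤ 1 := by
      filter_upwards [hκR, hGslice] with y h1 h2
      calc ∫⁻ x, ENNReal.ofReal (max (-(G (y, x))) 0) ∂(κ y)
          = ∫⁻ x, ENNReal.ofReal (max (-(llr (κ y) R x)) 0) ∂(κ y) :=
            lintegral_congr_ae (h2.mono fun x hx => by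
              have hx' : G (y, x) = llr (κ y) R x := hx
              simp only [hx'])
        _ = ENNReal.ofReal (∫ x, max (-(llr (κ y) R x)) 0 ∂(κ y)) :=
            (ofReal_integral_eq_lintegral_ofReal (integrable_negPart_llr h1)
              (Filter.Eventually.of_forall fun x => le_max_right _ _)).symm
        _ ≤ ENNReal.ofReal 1 := ENNReal.ofReal_le_ofReal (integral_negPart_llr_le h1)
        _ = 1 := ENNReal.ofReal_one
    calc ∫⁻ y, ∫⁻ x, ENNReal.ofReal (max (-(G (y, x))) 0) ∂(κ y) ∂P
        ≤ ∫⁻ _, 1 ∂P := lintegral_mono_ae hb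
      _ < ⊤ := by simp
  by_cases hint : Integrable (llr (P ⊗ₘ κ) (Q.prod R)) (P ⊗ₘ κ)
  · -- integrable case
    have hFG : Integrable (fun p => F p + G p) (P ⊗ₘ κ) := hint.congr hllr_joint
    have hFneg_int : Integrable (fun p => max (-(F p)) 0) (P ⊗ₘ κ) :=
      (h_int_fst _ ((measurable_llr P Q).neg.max measurable_const)).mpr
        (integrable_negPart_llr hPQ)
    have hFpos_int : Integrable (fun p => max (F p) 0) (P ⊗ₘ κ) := by
      refine Integrable.mono' (hFG.pos_part.add hGneg_int)
        ((hFm.max measurable_const).aestronglyMeasurable) ?_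
      refine Filter.Eventually.of_forall fun p => ?_
      rw [Real.norm_of_nonneg (le_max_right _ _)]
      simp only [Pi.add_apply]
      have h1 : F p ≤ max (F p + G p) 0 + max (-(G p)) 0 := by
        have h2 := le_max_left (F p + G p) (0 : ℝ)
        have h3 := le_max_left (-(G p)) (0 : ℝ)
        linarith
      refine max_le h1 (by
        have h2 := le_max_right (F p + G p) (0 : ℝ)
        have h3 := le_max_right (-(G p)) (0 : ℝ)
        linarith)
    have hF_int : Integrable F (P ⊗ₘ κ) := by
      have hFeq : F = fun p => max (F p) 0 - max (-(F p)) 0 :=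
        funext fun p => (posPart_sub_negPart _).symm
      rw [hFeq]; exact hFpos_int.sub hFneg_int
    have hG_int : Integrable G (P ⊗ₘ κ) := by
      have hGeq : G = fun p => (F p + G p) - F p := by funext p; ring
      rw [hGeq]; exact hFG.sub hF_int
    have hllrP_int : Integrable (llr P Q) P := (h_int_fst _ (measurable_llr P Q)).mp hF_int
    have hGslice_int : ∀ᵐ y ∂P, Integrable (fun x => G (y, x)) (κ y) :=
      ((Measure.integrable_compProd_iff hG_int.aestronglyMeasurable).mp hG_int).1
    have hWn_int : Integrable (fun y => ∫ x, ‖G (y, x)‖ ∂(κ y)) P :=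
      ((Measure.integrable_compProd_iff hG_int.aestronglyMeasurable).mp hG_int).2
    have hW_int : Integrable (fun y => ∫ x, G (y, x) ∂(κ y)) P := by
      refine hWn_int.mono'
        (hGm.stronglyMeasurable.integral_kernel_prod_right').aestronglyMeasurable ?_
      exact Filter.Eventually.of_forall fun y => norm_integral_le_integral_norm _
    have hW_nonneg : ∀ᵐ y ∂P, 0 ≤ ∫ x, G (y, x) ∂(κ y) := by
      filter_upwards [hκR, hGslice, hGslice_int] with y h1 h2 h3
      rw [integral_congr_ae h2]
      exact integral_llr_nonneg h1 (h3.congr h2)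
    have hklDiv_eq : ∀ᵐ y ∂P, klDiv (κ y) R = ENNReal.ofReal (∫ x, G (y, x) ∂(κ y)) := by
      filter_upwards [hκR, hGslice, hGslice_int] with y h1 h2 h3
      rw [klDiv_of_ac_int h1 (h3.congr h2), integral_congr_ae h2.symm]
    rw [klDiv_of_ac_int hAC hint, klDiv_of_ac_int hPQ hllrP_int,
      lintegral_congr_ae hklDiv_eq,
      ← ofReal_integral_eq_lintegral_ofReal hW_int hW_nonneg,
      integral_congr_ae hllr_joint, integral_add hF_int hG_int,
      Measure.integral_compProd hG_int, h_integral_fst _ (measurable_llr P Q)]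
    rw [ENNReal.ofReal_add (integral_llr_nonneg hPQ hllrP_int)
      (integral_nonneg_of_ae hW_nonneg)]
  · -- non-integrable case
    rw [klDiv_of_not (fun hc => hint hc.2)]
    by_contra hne
    have h1 : klDiv P Q ≠ ⊤ := by
      intro h
      rw [h, top_add] at hne
      exact hne rfl
    have h2 : (∫⁻ y, klDiv (κ y) R ∂P) ≠ ⊤ := by
      intro h
      rw [h, add_top] at hne
      exact hne rfl
    have hklPQ : Integrable (llr P Q) P := by
      by_contra hni
      exact h1 (klDiv_of_not fun hc => hni hc.2)
    have hF_int : Integrable F (P ⊗ₘ κ) := (h_int_fst _ (measurable_llr P Q)).mpr hklPQ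
    have hGpos_fin : ∫⁻ p, ENNReal.ofReal (G p) ∂(P ⊗ₘ κ) ≠ ⊤ := by
      rw [Measure.lintegral_compProd hGm.ennreal_ofReal]
      have hb : ∀ᵐ y ∂P, ∫⁻ x, ENNReal.ofReal (G (y, x)) ∂(κ y) ≤ klDiv (κ y) R + 1 := by
        filter_upwards [hκR, hGslice] with y hy1 hy2
        calc ∫⁻ x, ENNReal.ofReal (G (y, x)) ∂(κ y)
            = ∫⁻ x, ENNReal.ofReal (llr (κ y) R x) ∂(κ y) :=
              lintegral_congr_ae (hy2.mono fun x hx => by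
                have hx' : G (y, x) = llr (κ y) R x := hx
                simp only [hx'])
          _ ≤ klDiv (κ y) R + 1 := lintegral_ofReal_llr_le hy1
      refine ne_top_of_le_ne_top ?_ (lintegral_mono_ae hb)
      rw [lintegral_add_right _ measurable_const]
      simp only [lintegral_one, measure_univ, mul_one]
      exact ENNReal.add_ne_top.mpr ⟨h2, ENNReal.one_ne_top⟩
    have hG_int : Integrable G (P ⊗ₘ κ) := by
      have hpos : Integrable (fun p => max (G p) 0) (P ⊗ₘ κ) := by
        refine ⟨(hGm.max measurable_const).aestronglyMeasurable, ?_⟩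
        rw [hasFiniteIntegral_iff_ofReal (f := fun p => max (G p) 0)
          (Filter.Eventually.of_forall fun p => le_max_right _ _)]
        rw [← lintegral_ofReal_eq_posPart]
        exact hGpos_fin.lt_top
      have hGeq : G = fun p => max (G p) 0 - max (-(G p)) 0 :=
        funext fun p => (posPart_sub_negPart _).symm
      rw [hGeq]; exact hpos.sub hGneg_int
    exact hint ((hF_int.add hG_int).congr hllr_joint.symm)

lemma klDiv_compProd_prod_self (P : Measure β) [IsProbabilityMeasure P]
    (κ : Kernel β γ) [IsMarkovKernel κ] (R : Measure γ) [IsProbabilityMeasure R] :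
    klDiv (P ⊗ₘ κ) (P.prod R) = ∫⁻ y, klDiv (κ y) R ∂P := by
  rw [klDiv_compProd_prod P P κ R, klDiv_self, zero_add]

end KLAux
namespace KLAux
open ProbabilityTheory

section Struct
variable {α β γ : Type*} {mα : MeasurableSpace α} {mβ : MeasurableSpace β}
  {mγ : MeasurableSpace γ}

lemma compProd_map_kernel (μ : Measure α) [IsProbabilityMeasure μ] (κ : Kernel α β)
    [IsMarkovKernel κ] {f : β → γ} (hf : Measurable f) :
    μ ⊗ₘ (Kernel.map κ f) = (μ ⊗ₘ κ).map (Prod.map id f) := by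
  haveI := Kernel.IsMarkovKernel.map κ hf
  ext s hs
  rw [Measure.map_apply (measurable_id.prodMap hf) hs, Measure.compProd_apply hs,
    Measure.compProd_apply ((measurable_id.prodMap hf) hs)]
  refine lintegral_congr fun y => ?_
  rw [Kernel.map_apply' κ hf _ (measurable_prodMk_left hs)]
  congr 1

lemma map_equiv_compProd {δ : Type*} {mδ : MeasurableSpace δ} (μ : Measure δ)
    [IsProbabilityMeasure μ] (e : δ ≃ᵐ α) (κ : Kernel α β) [IsMarkovKernel κ] :
    (μ.map e) ⊗ₘ κ = (μ ⊗ₘ Kernel.comap κ e e.measurable).map (Prod.map e id) := by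
  haveI : IsProbabilityMeasure (μ.map e) := Measure.isProbabilityMeasure_map e.measurable.aemeasurable
  ext s hs
  rw [Measure.map_apply (e.measurable.prodMap measurable_id) hs, Measure.compProd_apply hs,
    Measure.compProd_apply ((e.measurable.prodMap measurable_id) hs),
    lintegral_map_equiv (fun a => κ a (Prod.mk a ⁻¹' s)) e]
  refine lintegral_congr fun d => ?_
  rw [Kernel.comap_apply]
  congr 1

lemma compProd_compProd (μ : Measure α) [IsProbabilityMeasure μ] (κ : Kernel α β)
    [IsMarkovKernel κ] (ξ : Kernel (α × β) γ) [IsMarkovKernel ξ] :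
    μ ⊗ₘ (κ ⊗ₖ ξ) = ((μ ⊗ₘ κ) ⊗ₘ ξ).map (MeasurableEquiv.prodAssoc) := by
  haveI : IsProbabilityMeasure (μ ⊗ₘ κ) :=
    ⟨by rw [Measure.compProd_apply_univ]; exact measure_univ⟩
  ext s hs
  have hs' : MeasurableSet (MeasurableEquiv.prodAssoc ⁻¹' s) :=
    MeasurableEquiv.prodAssoc.measurable hs
  rw [Measure.map_apply MeasurableEquiv.prodAssoc.measurable hs, Measure.compProd_apply hs,
    Measure.compProd_apply hs',
    Measure.lintegral_compProd (Kernel.measurable_kernel_prodMk_left hs')]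
  refine lintegral_congr fun a => ?_
  rw [Kernel.compProd_apply (measurable_prodMk_left hs)]
  refine lintegral_congr fun b => ?_
  congr 1

lemma kernel_compProd_apply_eq (κ : Kernel α β) [IsMarkovKernel κ] (ξ : Kernel (α × β) γ)
    [IsMarkovKernel ξ] (a : α) :
    (κ ⊗ₖ ξ) a = κ a ⊗ₘ Kernel.comap ξ (fun b => (a, b)) measurable_prodMk_left := by
  ext s hs
  rw [Kernel.compProd_apply hs, Measure.compProd_apply hs]
  refine lintegral_congr fun b => ?_
  rw [Kernel.comap_apply]

lemma compProd_condDistrib {Ω E : Type*} {mΩ : MeasurableSpace Ω} {mE : MeasurableSpace E}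
    [StandardBorelSpace E] [Nonempty E] (μ : Measure Ω) [IsFiniteMeasure μ]
    {T : Ω → β} {S : Ω → E} (hT : Measurable T) (hS : Measurable S) :
    μ.map T ⊗ₘ condDistrib S T μ = μ.map (fun ω => (T ω, S ω)) := by
  haveI : IsFiniteMeasure (μ.map (fun ω => (T ω, S ω))) :=
    Measure.isFiniteMeasure_map μ _
  rw [condDistrib]
  conv_rhs => rw [← Measure.disintegrate (μ.map (fun ω => (T ω, S ω))) (μ.map (fun ω => (T ω, S ω))).condKernel]
  rw [Measure.fst_map_prodMk hS]

end Struct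
end KLAux
namespace KLAux
open ProbabilityTheory

section Main
variable {Ω 𝒳 𝒴 𝒵 : Type*} [MeasurableSpace Ω]
    [MeasurableSpace 𝒳] [StandardBorelSpace 𝒳] [Nonempty 𝒳]
    [MeasurableSpace 𝒴] [StandardBorelSpace 𝒴] [Nonempty 𝒴]
    [MeasurableSpace 𝒵]
    (μ : Measure Ω) [IsProbabilityMeasure μ]
    (X : Ω → 𝒳) (Y : Ω → 𝒴) (Z : Ω → 𝒵)

lemma map_ZYX_eq (hX : Measurable X) (hY : Measurable Y) (hZ : Measurable Z) :
    μ.map (fun ω => (Z ω, (Y ω, X ω)))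
      = μ.map Z ⊗ₘ ((condDistrib Y Z μ) ⊗ₖ
          (Kernel.comap (condDistrib X (fun ω => (Y ω, Z ω)) μ) Prod.swap measurable_swap)) := by
  haveI : IsProbabilityMeasure (μ.map Z) := Measure.isProbabilityMeasure_map hZ.aemeasurable
  haveI : IsProbabilityMeasure (μ.map (fun ω => (Y ω, Z ω))) :=
    Measure.isProbabilityMeasure_map (hY.prodMk hZ).aemeasurable
  rw [compProd_compProd, compProd_condDistrib μ hZ hY]
  have h1 : μ.map (fun ω => (Z ω, Y ω))
      = (μ.map (fun ω => (Y ω, Z ω))).map ((MeasurableEquiv.prodComm : 𝒴 × 𝒵 ≃ᵐ 𝒵 × 𝒴)) := by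
    rw [Measure.map_map ((MeasurableEquiv.prodComm : 𝒴 × 𝒵 ≃ᵐ 𝒵 × 𝒴)).measurable (hY.prodMk hZ)]
    rfl
  rw [h1, map_equiv_compProd]
  have h2 : Kernel.comap
      (Kernel.comap (condDistrib X (fun ω => (Y ω, Z ω)) μ) Prod.swap measurable_swap)
      ((MeasurableEquiv.prodComm : 𝒴 × 𝒵 ≃ᵐ 𝒵 × 𝒴)) ((MeasurableEquiv.prodComm : 𝒴 × 𝒵 ≃ᵐ 𝒵 × 𝒴)).measurable
      = condDistrib X (fun ω => (Y ω, Z ω)) μ := by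
    ext p : 1
    rw [Kernel.comap_apply, Kernel.comap_apply]
    congr 1
  rw [h2, compProd_condDistrib μ (hY.prodMk hZ) hX,
    Measure.map_map (MeasurableEquiv.prodAssoc.measurable)
      (((MeasurableEquiv.prodComm : 𝒴 × 𝒵 ≃ᵐ 𝒵 × 𝒴)).measurable.prodMap measurable_id),
    Measure.map_map (MeasurableEquiv.prodAssoc.measurable.comp
      (((MeasurableEquiv.prodComm : 𝒴 × 𝒵 ≃ᵐ 𝒵 × 𝒴)).measurable.prodMap measurable_id))
      ((hY.prodMk hZ).prodMk hX)]
  rfl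

lemma condDistrib_facts (hX : Measurable X) (hY : Measurable Y) (hZ : Measurable Z) :
    ∀ᵐ z ∂(μ.map Z),
      ((condDistrib (fun ω => (X ω, Y ω)) Z μ z).map Prod.swap
          = condDistrib Y Z μ z ⊗ₘ
              Kernel.comap (condDistrib X (fun ω => (Y ω, Z ω)) μ) (fun y => (y, z))
                measurable_prodMk_right)
        ∧ condDistrib X Z μ z = (condDistrib (fun ω => (X ω, Y ω)) Z μ z).map Prod.fst := by
  haveI : IsProbabilityMeasure (μ.map Z) := Measure.isProbabilityMeasure_map hZ.aemeasurable
  set κXY := condDistrib (fun ω => (X ω, Y ω)) Z μ with hκXY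
  have hdef : μ.map (fun ω => (Z ω, (X ω, Y ω))) = μ.map Z ⊗ₘ κXY :=
    (compProd_condDistrib μ hZ (hX.prodMk hY)).symm
  haveI := Kernel.IsMarkovKernel.map κXY
    (measurable_swap : Measurable (Prod.swap : 𝒳 × 𝒴 → 𝒴 × 𝒳))
  haveI := Kernel.IsMarkovKernel.map κXY
    (measurable_fst : Measurable (Prod.fst : 𝒳 × 𝒴 → 𝒳))
  have hswap : ∀ᵐ z ∂(μ.map Z),
      Kernel.map κXY Prod.swap z = condDistrib (fun ω => (Y ω, X ω)) Z μ z := by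
    refine (condDistrib_ae_eq_of_measure_eq_compProd (κ := Kernel.map κXY Prod.swap) Z (hY.prodMk hX).aemeasurable ?_).mono fun _ h => h.symm
    rw [compProd_map_kernel _ _ measurable_swap, ← hdef,
      Measure.map_map (measurable_id.prodMap measurable_swap) (hZ.prodMk (hX.prodMk hY))]
    rfl
  have hη : ∀ᵐ z ∂(μ.map Z),
      ((condDistrib Y Z μ) ⊗ₖ
        (Kernel.comap (condDistrib X (fun ω => (Y ω, Z ω)) μ) Prod.swap measurable_swap)) z
      = condDistrib (fun ω => (Y ω, X ω)) Z μ z :=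
    (condDistrib_ae_eq_of_measure_eq_compProd Z (hY.prodMk hX).aemeasurable
      (map_ZYX_eq μ X Y Z hX hY hZ)).mono fun _ h => h.symm
  have hfst : ∀ᵐ z ∂(μ.map Z), Kernel.map κXY Prod.fst z = condDistrib X Z μ z := by
    refine (condDistrib_ae_eq_of_measure_eq_compProd (κ := Kernel.map κXY Prod.fst) Z hX.aemeasurable ?_).mono fun _ h => h.symm
    rw [compProd_map_kernel _ _ measurable_fst, ← hdef,
      Measure.map_map (measurable_id.prodMap measurable_fst) (hZ.prodMk (hX.prodMk hY))]
    rfl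
  filter_upwards [hswap, hη, hfst] with z h1 h2 h3
  constructor
  · have e1 : (κXY z).map Prod.swap = Kernel.map κXY Prod.swap z :=
      (Kernel.map_apply κXY measurable_swap z).symm
    rw [e1, h1, ← h2, kernel_compProd_apply_eq]
    congr 1
  · rw [← h3, Kernel.map_apply κXY measurable_fst]

lemma key_pointwise {𝒳' 𝒴' : Type*} [MeasurableSpace 𝒳'] [StandardBorelSpace 𝒳'] [Nonempty 𝒳']
    [MeasurableSpace 𝒴'] [StandardBorelSpace 𝒴'] [Nonempty 𝒴']
    (ρ : Measure (𝒳' × 𝒴')) [IsProbabilityMeasure ρ]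
    (νY : Measure 𝒴') [IsProbabilityMeasure νY]
    (νX : Measure 𝒳') [IsProbabilityMeasure νX]
    (σ : Kernel 𝒴' 𝒳') [IsMarkovKernel σ]
    (h1 : ρ.map Prod.swap = νY ⊗ₘ σ)
    (h2 : νX = ρ.map Prod.fst) :
    (klDiv ρ (νX.prod νY) = ∫⁻ y, klDiv (σ y) νX ∂νY)
    ∧ ∀ (Q : Measure 𝒳') [IsProbabilityMeasure Q],
        klDiv ρ (νX.prod νY) ≤ ∫⁻ y, klDiv (σ y) Q ∂νY := by
  have hco : ⇑((MeasurableEquiv.prodComm : 𝒳' × 𝒴' ≃ᵐ 𝒴' × 𝒳')) = Prod.swap := rfl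
  have hchain : ∀ (ξ : Measure 𝒳') [IsProbabilityMeasure ξ],
      klDiv ρ (ξ.prod νY) = ∫⁻ y, klDiv (σ y) ξ ∂νY := by
    intro ξ _
    have hm1 : ρ.map ((MeasurableEquiv.prodComm : 𝒳' × 𝒴' ≃ᵐ 𝒴' × 𝒳')) = νY ⊗ₘ σ := by rw [hco]; exact h1
    have hm2 : (ξ.prod νY).map ((MeasurableEquiv.prodComm : 𝒳' × 𝒴' ≃ᵐ 𝒴' × 𝒳')) = νY.prod ξ := by
      rw [hco]; exact Measure.prod_swap
    rw [← klDiv_map_equiv ((MeasurableEquiv.prodComm : 𝒳' × 𝒴' ≃ᵐ 𝒴' × 𝒳')) ρ (ξ.prod νY), hm1, hm2,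
      klDiv_compProd_prod_self]
  refine ⟨hchain νX, ?_⟩
  intro Q _
  rw [← hchain Q, hchain νX, ← hchain νX]
  have h2' : νX = ρ.fst := h2
  have hA : klDiv ρ (νX.prod νY) = ∫⁻ x, klDiv (ρ.condKernel x) νY ∂ρ.fst := by
    conv_lhs => rw [← Measure.disintegrate ρ ρ.condKernel]
    rw [h2', klDiv_compProd_prod_self]
  have hB : klDiv ρ (Q.prod νY) = klDiv ρ.fst Q + ∫⁻ x, klDiv (ρ.condKernel x) νY ∂ρ.fst := by
    conv_lhs => rw [← Measure.disintegrate ρ ρ.condKernel]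
    rw [klDiv_compProd_prod]
  rw [hA, hB]
  exact le_add_self

end Main
end KLAux

/-- Variational form of the disintegrated mutual information: for any `Z`-measurable family of
probability measures `Q`, `I^Z(X;Y) ≤ E_{Y|Z}[KL(P_{X|Y,Z} ‖ Q)]`, with equality for
`Q = P_{X|Z}`. -/
theorem disMI_le_expectation_klDiv {Ω 𝒳 𝒴 𝒵 : Type*} [MeasurableSpace Ω]
    [MeasurableSpace 𝒳] [StandardBorelSpace 𝒳] [Nonempty 𝒳]
    [MeasurableSpace 𝒴] [StandardBorelSpace 𝒴] [Nonempty 𝒴]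
    [MeasurableSpace 𝒵]
    (μ : Measure Ω) [IsProbabilityMeasure μ]
    (X : Ω → 𝒳) (Y : Ω → 𝒴) (Z : Ω → 𝒵)
    (hX : Measurable X) (hY : Measurable Y) (hZ : Measurable Z) :
    (∀ Q : 𝒵 → Measure 𝒳, Measurable Q → (∀ z, IsProbabilityMeasure (Q z)) →
        ∀ᵐ z ∂(μ.map Z),
          disMI μ X Y Z z
            ≤ ∫⁻ y, klDiv (condDistrib X (fun ω => (Y ω, Z ω)) μ (y, z)) (Q z)
                ∂(condDistrib Y Z μ z)) ∧
      (∀ᵐ z ∂(μ.map Z),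
        disMI μ X Y Z z
          = ∫⁻ y, klDiv (condDistrib X (fun ω => (Y ω, Z ω)) μ (y, z)) (condDistrib X Z μ z)
              ∂(condDistrib Y Z μ z)) := by
  have hfacts := KLAux.condDistrib_facts μ X Y Z hX hY hZ
  constructor
  · intro Q _ hQp
    filter_upwards [hfacts] with z hz
    obtain ⟨h1, h2⟩ := hz
    haveI := hQp z
    have hkey := KLAux.key_pointwise (condDistrib (fun ω => (X ω, Y ω)) Z μ z)
      (condDistrib Y Z μ z) (condDistrib X Z μ z)
      (Kernel.comap (condDistrib X (fun ω => (Y ω, Z ω)) μ) (fun y => (y, z))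
        measurable_prodMk_right) h1 h2
    rw [disMI]
    refine le_trans (hkey.2 (Q z)) (le_of_eq ?_)
    refine lintegral_congr fun y => ?_
    rw [Kernel.comap_apply]
  · filter_upwards [hfacts] with z hz
    obtain ⟨h1, h2⟩ := hz
    have hkey := KLAux.key_pointwise (condDistrib (fun ω => (X ω, Y ω)) Z μ z)
      (condDistrib Y Z μ z) (condDistrib X Z μ z)
      (Kernel.comap (condDistrib X (fun ω => (Y ω, Z ω)) μ) (fun y => (y, z))
        measurable_prodMk_right) h1 h2
    rw [disMI, hkey.1]
    refine lintegral_congr fun y => ?_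
    rw [Kernel.comap_apply]
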